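/- arXiv:1909.03899 — 2 statements merged into one kernel-verified Lean document; each statement's English description precedes it below -/
import Mathlib

section
/- Let G and H be finite groups with coprime orders. Suppose G admits generating pairs (x₁,y₁),...,(xₙ,yₙ) with ⋂ᵢ Σ_G(xᵢ,yᵢ) = {e}, and H admits generating pairs (u₁,v₁), (u₂,v₂) with Σ_H(u₁,v₁) ∩ Σ_H(u₂,v₂) = {e}, where n ≥ 2. Then G × H admits n generating pairs whose Σ-sets have trivial intersection, namely pᵢ = (xᵢ, uⱼ(ᵢ)), qᵢ = (yᵢ, vⱼ(ᵢ)) with j(1)=1 and j(i)=2 for i ≥ 2. -/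
def BSigma {G : Type*} [Group G] (x y : G) : Set G :=
  ⋃ k : G, (fun g => k⁻¹ * g * k) ''
    ((Subgroup.zpowers x : Set G) ∪ (Subgroup.zpowers y : Set G) ∪
      (Subgroup.zpowers (x * y) : Set G))

lemma one_mem_BSigma {G : Type*} [Group G] (x y : G) : (1 : G) ∈ BSigma x y :=
  Set.mem_iUnion.2 ⟨1, ⟨1, Or.inl (Or.inl (Subgroup.one_mem _)), by simp⟩⟩

lemma BSigma_fst {G H : Type*} [Group G] [Group H] {a b : G} {u v : H} {w : G × H}
    (hm : w ∈ BSigma (a, u) (b, v)) : w.1 ∈ BSigma a b := by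
  obtain ⟨k, z, hz, hw⟩ := Set.mem_iUnion.1 hm
  refine Set.mem_iUnion.2 ⟨k.1, z.1, ?_, by rw [← hw]; rfl⟩
  rcases hz with (hz | hz) | hz
  · obtain ⟨m, hm'⟩ := Subgroup.mem_zpowers_iff.1 hz
    exact Or.inl (Or.inl (Subgroup.mem_zpowers_iff.2 ⟨m, by rw [← hm']; simp⟩))
  · obtain ⟨m, hm'⟩ := Subgroup.mem_zpowers_iff.1 hz
    exact Or.inl (Or.inr (Subgroup.mem_zpowers_iff.2 ⟨m, by rw [← hm']; simp⟩))
  · obtain ⟨m, hm'⟩ := Subgroup.mem_zpowers_iff.1 hz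
    exact Or.inr (Subgroup.mem_zpowers_iff.2 ⟨m, by rw [← hm']; simp⟩)

lemma BSigma_snd {G H : Type*} [Group G] [Group H] {a b : G} {u v : H} {w : G × H}
    (hm : w ∈ BSigma (a, u) (b, v)) : w.2 ∈ BSigma u v := by
  obtain ⟨k, z, hz, hw⟩ := Set.mem_iUnion.1 hm
  refine Set.mem_iUnion.2 ⟨k.2, z.2, ?_, by rw [← hw]; rfl⟩
  rcases hz with (hz | hz) | hz
  · obtain ⟨m, hm'⟩ := Subgroup.mem_zpowers_iff.1 hz
    exact Or.inl (Or.inl (Subgroup.mem_zpowers_iff.2 ⟨m, by rw [← hm']; simp⟩))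
  · obtain ⟨m, hm'⟩ := Subgroup.mem_zpowers_iff.1 hz
    exact Or.inl (Or.inr (Subgroup.mem_zpowers_iff.2 ⟨m, by rw [← hm']; simp⟩))
  · obtain ⟨m, hm'⟩ := Subgroup.mem_zpowers_iff.1 hz
    exact Or.inr (Subgroup.mem_zpowers_iff.2 ⟨m, by rw [← hm']; simp⟩)

lemma gen_prod {G H : Type*} [Group G] [Group H] [Finite G] [Finite H]
    (hco : Nat.Coprime (Nat.card G) (Nat.card H)) (a b : G) (u v : H)
    (hG : Subgroup.closure {a, b} = ⊤) (hH : Subgroup.closure {u, v} = ⊤) :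
    Subgroup.closure {(a, u), (b, v)} = ⊤ := by
  set K := Subgroup.closure {(a, u), (b, v)} with hK
  have h1 : K.map (MonoidHom.fst G H) = ⊤ := by
    rw [hK, MonoidHom.map_closure]
    convert hG using 2
    simp [Set.image_insert_eq]
  have h2 : K.map (MonoidHom.snd G H) = ⊤ := by
    rw [hK, MonoidHom.map_closure]
    convert hH using 2
    simp [Set.image_insert_eq]
  have d1 : Nat.card G ∣ Nat.card K := by
    have := Subgroup.card_dvd_of_surjective _ ((MonoidHom.fst G H).subgroupMap_surjective K)
    rwa [h1, Subgroup.card_top] at this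
  have d2 : Nat.card H ∣ Nat.card K := by
    have := Subgroup.card_dvd_of_surjective _ ((MonoidHom.snd G H).subgroupMap_surjective K)
    rwa [h2, Subgroup.card_top] at this
  have d3 : Nat.card G * Nat.card H ∣ Nat.card K := hco.mul_dvd_of_dvd_of_dvd d1 d2
  have d4 : Nat.card K ∣ Nat.card (G × H) := Subgroup.card_subgroup_dvd_card K
  rw [Nat.card_prod] at d4
  exact Subgroup.eq_top_of_card_eq K (by rw [Nat.card_prod]; exact Nat.dvd_antisymm d4 d3)

theorem stmt13 {G H : Type*} [Group G] [Group H] [Finite G] [Finite H]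
    (hco : Nat.Coprime (Nat.card G) (Nat.card H))
    (n : ℕ) (hn : 2 ≤ n) (x y : Fin n → G)
    (hgenG : ∀ i, Subgroup.closure {x i, y i} = ⊤)
    (hG : ⋂ i, BSigma (x i) (y i) = {(1 : G)})
    (u₁ v₁ u₂ v₂ : H)
    (hgenH₁ : Subgroup.closure {u₁, v₁} = ⊤)
    (hgenH₂ : Subgroup.closure {u₂, v₂} = ⊤)
    (hH : BSigma u₁ v₁ ∩ BSigma u₂ v₂ = {(1 : H)}) :
    let p : Fin n → G × H := fun i => (x i, if (i : ℕ) = 0 then u₁ else u₂)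
    let q : Fin n → G × H := fun i => (y i, if (i : ℕ) = 0 then v₁ else v₂)
    (∀ i, Subgroup.closure {p i, q i} = ⊤) ∧
      ⋂ i, BSigma (p i) (q i) = {(1 : G × H)} := by
  intro p q
  constructor
  · intro i
    by_cases h0 : (i : ℕ) = 0
    · simp only [p, q, h0, if_pos]
      exact gen_prod hco _ _ _ _ (hgenG i) hgenH₁
    · simp only [p, q, h0, if_neg, if_false]
      exact gen_prod hco _ _ _ _ (hgenG i) hgenH₂
  · ext w
    simp only [Set.mem_iInter, Set.mem_singleton_iff]
    constructor
    · intro hw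
      have hfst : w.1 = 1 := by
        have : w.1 ∈ ⋂ i, BSigma (x i) (y i) :=
          Set.mem_iInter.2 fun i => BSigma_fst (hw i)
        rwa [hG, Set.mem_singleton_iff] at this
      have hsnd : w.2 = 1 := by
        have h1 : w.2 ∈ BSigma u₁ v₁ := by
          have := hw ⟨0, by omega⟩
          simp only [p, q] at this
          exact BSigma_snd this
        have h2 : w.2 ∈ BSigma u₂ v₂ := by
          have := hw ⟨1, by omega⟩
          simp only [p, q] at this
          exact BSigma_snd this
        have : w.2 ∈ BSigma u₁ v₁ ∩ BSigma u₂ v₂ := ⟨h1, h2⟩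
        rwa [hH, Set.mem_singleton_iff] at this
      exact Prod.ext hfst hsnd
    · rintro rfl i
      have : ((1 : G), (1 : H)) ∈ BSigma (p i) (q i) := by
        rcases hp : p i with ⟨pa, pb⟩
        rcases hq : q i with ⟨qa, qb⟩
        exact one_mem_BSigma _ _
      exact this
end

section
/- Let G = C₉ × C₉. There exist four generating pairs of G whose Σ-sets have trivial intersection, and no three generating pairs of G have Σ-sets with trivial intersection. Hence the Beauville dimension of C₉ × C₉ is 4. -/
def ASigma {G : Type*} [AddCommGroup G] (x y : G) : Set G :=
  (AddSubgroup.zmultiples x : Set G) ∪ (AddSubgroup.zmultiples y : Set G) ∪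
    (AddSubgroup.zmultiples (x + y) : Set G)

/-!
Multiplication by 3 on `G = C₉ × C₉` factors through `G/3G ≅ C₃ × C₃` and lands in `3G`. If `x, y`
generate `G`, their images `u, v` form a basis of `C₃ × C₃`, so `⟨u⟩, ⟨v⟩, ⟨u + v⟩` are three of its
four lines; hence `Σ(x, y) ⊇ Σ(3x, 3y)` contains all but at most one of the four subgroups of order 3
of `3G`. Three generating pairs thus leave one of these subgroups inside every Σ-set, while four
suitable pairs are found and checked by computation.
-/

open AddSubgroup

section AddCommGroup

variable {G H : Type*} [AddCommGroup G] [AddCommGroup H]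

theorem zero_mem_ASigma (x y : G) : 0 ∈ ASigma x y :=
  Or.inl (Or.inl (zero_mem _))

theorem ASigma_nsmul_subset (n : ℕ) (x y : G) : ASigma (n • x) (n • y) ⊆ ASigma x y := by
  have h (z : G) : (zmultiples (n • z) : Set G) ⊆ zmultiples z :=
    zmultiples_le_of_mem (nsmul_mem (mem_zmultiples z) n)
  rw [ASigma, ASigma, ← nsmul_add]
  exact Set.union_subset_union (Set.union_subset_union (h x) (h y)) (h (x + y))

theorem AddMonoidHom.image_ASigma (f : G →+ H) (x y : G) :
    f '' ASigma x y = ASigma (f x) (f y) := by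
  simp only [ASigma, Set.image_union, ← coe_map, AddMonoidHom.map_zmultiples, map_add]

theorem AddMonoidHom.closure_pair_eq_top {f : G →+ H} (hf : Function.Surjective f) {x y : G}
    (h : AddSubgroup.closure {x, y} = ⊤) : AddSubgroup.closure {f x, f y} = ⊤ := by
  rw [← Set.image_pair, ← AddMonoidHom.map_closure, h, map_top_of_surjective f hf]

end AddCommGroup

section ZModModule

variable (n : ℕ) {M : Type*} [AddCommGroup M] [Module (ZMod n) M]

theorem mem_zmultiples_iff_exists_zmod_smul {u t : M} :
    t ∈ zmultiples u ↔ ∃ c : ZMod n, c • u = t :=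
  ⟨fun ⟨m, hm⟩ => ⟨m, by rwa [Int.cast_smul_eq_zsmul]⟩,
    fun ⟨c, hc⟩ => hc ▸ ZMod.smul_mem (mem_zmultiples u) c⟩

theorem mem_ASigma_iff_exists_zmod_smul {u v t : M} :
    t ∈ ASigma u v ↔
      (∃ c : ZMod n, c • u = t) ∨ (∃ c : ZMod n, c • v = t) ∨ ∃ c : ZMod n, c • (u + v) = t := by
  simp only [ASigma, Set.mem_union, SetLike.mem_coe, mem_zmultiples_iff_exists_zmod_smul n,
    or_assoc]

theorem closure_pair_eq_top_iff_exists_zmod_smul {u v : M} :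
    AddSubgroup.closure {u, v} = ⊤ ↔ ∀ t : M, ∃ a b : ZMod n, a • u + b • v = t := by
  constructor
  · intro h t
    obtain ⟨k, m, hkm⟩ := mem_closure_pair.mp (h ▸ mem_top t)
    exact ⟨k, m, by simpa only [Int.cast_smul_eq_zsmul] using hkm⟩
  · refine fun h => eq_top_iff.mpr fun t _ => ?_
    obtain ⟨a, b, rfl⟩ := h t
    exact add_mem (ZMod.smul_mem (subset_closure (by simp)) a)
      (ZMod.smul_mem (subset_closure (by simp)) b)

end ZModModule

-- One generator of each of the four lines of `C₃ × C₃`.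
def line : Fin 4 → ZMod 3 × ZMod 3 := ![(1, 0), (0, 1), (1, 1), (1, 2)]

theorem line_mem_ASigma_or_of_closure_eq_top {u v : ZMod 3 × ZMod 3}
    (h : AddSubgroup.closure {u, v} = ⊤) {j k : Fin 4} (hjk : j ≠ k) :
    line j ∈ ASigma u v ∨ line k ∈ ASigma u v := by
  revert u v j k
  simp only [closure_pair_eq_top_iff_exists_zmod_smul 3, mem_ASigma_iff_exists_zmod_smul 3]
  decide

def reduceMod3 : ZMod 9 × ZMod 9 →+ ZMod 3 × ZMod 3 :=
  let r := (ZMod.castHom (by norm_num : 3 ∣ 9) (ZMod 3)).toAddMonoidHom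
  r.prodMap r

theorem reduceMod3_surjective : Function.Surjective reduceMod3 :=
  have hr := ZMod.castHom_surjective (by norm_num : 3 ∣ 9)
  Prod.map_surjective.mpr ⟨hr, hr⟩

def timesThree : ZMod 3 × ZMod 3 →+ ZMod 9 × ZMod 9 :=
  let t := AddMonoidHom.mk' (fun a : ZMod 3 => 3 * (a.val : ZMod 9)) (by decide)
  t.prodMap t

theorem timesThree_reduceMod3 (x : ZMod 9 × ZMod 9) : timesThree (reduceMod3 x) = 3 • x := by
  revert x; decide

theorem timesThree_line_ne_zero (j : Fin 4) : timesThree (line j) ≠ 0 := by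
  revert j; decide

theorem timesThree_line_mem_ASigma_or {x y : ZMod 9 × ZMod 9}
    (h : AddSubgroup.closure {x, y} = ⊤) {j k : Fin 4} (hjk : j ≠ k) :
    timesThree (line j) ∈ ASigma x y ∨ timesThree (line k) ∈ ASigma x y := by
  have hsub : timesThree '' ASigma (reduceMod3 x) (reduceMod3 y) ⊆ ASigma x y := by
    rw [timesThree.image_ASigma, timesThree_reduceMod3, timesThree_reduceMod3]
    exact ASigma_nsmul_subset 3 x y
  exact (line_mem_ASigma_or_of_closure_eq_top
    (reduceMod3.closure_pair_eq_top reduceMod3_surjective h) hjk).imp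
    (fun hj => hsub ⟨_, hj, rfl⟩) (fun hk => hsub ⟨_, hk, rfl⟩)

theorem iInter_ASigma_ne_singleton_zero {ι : Type*} [Fintype ι] (hι : Fintype.card ι < 4)
    (x y : ι → ZMod 9 × ZMod 9) (hgen : ∀ i, AddSubgroup.closure {x i, y i} = ⊤) :
    ⋂ i, ASigma (x i) (y i) ≠ {0} := by
  intro hinter
  have hmiss (j : Fin 4) : ∃ i, timesThree (line j) ∉ ASigma (x i) (y i) := by
    by_contra! hj
    exact timesThree_line_ne_zero j (Set.mem_singleton_iff.mp (hinter ▸ Set.mem_iInter.mpr hj))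
  choose b hb using hmiss
  obtain ⟨j, k, hjk, hbjk⟩ := Fintype.exists_ne_map_eq_of_card_lt b (by rwa [Fintype.card_fin])
  rcases timesThree_line_mem_ASigma_or (hgen (b j)) hjk with h | h
  · exact hb j h
  · exact hb k (hbjk ▸ h)

def beauvilleX : Fin 4 → ZMod 9 × ZMod 9 := ![(0, 1), (0, 1), (0, 1), (1, 0)]
def beauvilleY : Fin 4 → ZMod 9 × ZMod 9 := ![(1, 0), (1, 1), (2, 0), (1, 1)]

theorem closure_beauvillePair_eq_top (i : Fin 4) :
    AddSubgroup.closure {beauvilleX i, beauvilleY i} = ⊤ := by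
  revert i
  simp only [closure_pair_eq_top_iff_exists_zmod_smul 9]
  decide

theorem iInter_ASigma_beauvillePair : ⋂ i, ASigma (beauvilleX i) (beauvilleY i) = {0} := by
  refine Set.eq_singleton_iff_unique_mem.mpr
    ⟨Set.mem_iInter.mpr fun i => zero_mem_ASigma _ _, fun t ht => ?_⟩
  revert t
  simp only [Set.mem_iInter, mem_ASigma_iff_exists_zmod_smul 9]
  decide

theorem stmt15 :
    (∃ x y : Fin 4 → ZMod 9 × ZMod 9,
      (∀ i, AddSubgroup.closure {x i, y i} = ⊤) ∧
      ⋂ i, ASigma (x i) (y i) = {(0 : ZMod 9 × ZMod 9)}) ∧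
    (∀ x y : Fin 3 → ZMod 9 × ZMod 9,
      (∀ i, AddSubgroup.closure {x i, y i} = ⊤) →
      ⋂ i, ASigma (x i) (y i) ≠ {(0 : ZMod 9 × ZMod 9)}) :=
  ⟨⟨beauvilleX, beauvilleY, closure_beauvillePair_eq_top, iInter_ASigma_beauvillePair⟩,
    iInter_ASigma_ne_singleton_zero (by simp)⟩
end
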